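/- Let A be a Hilbert algebra and R ⊆ A a special subset that is a closure retract, i.e., for every a ∈ A the set {x ∈ R : a ≤ x} has a least element. Define φ : A → A by φ(a) = min{x ∈ R : a ≤ x}. Then φ is a closure endomorphism of A whose fixpoint set {x ∈ A : φ(x) = x} equals R. Conversely, for every closure endomorphism φ of A, its fixpoint set F_φ = {x ∈ A : φ(x) = x} is a special closure retract and φ(a) = min{x ∈ F_φ : a ≤ x} for every a ∈ A. -/
import Mathlib


/-- A Hilbert algebra: a set with implication `imp` and constant `one`. -/
class HilbertAlgebra (A : Type*) where
  imp : A → A → A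
  one : A
  imp_one : ∀ x y : A, imp x (imp y x) = one
  imp_distrib : ∀ x y z : A,
    imp (imp x (imp y z)) (imp (imp x y) (imp x z)) = one
  imp_antisymm : ∀ x y : A, imp x y = one → imp y x = one → x = y

namespace HilbertAlgebra

variable {A : Type*} [HilbertAlgebra A]

/-- The natural order of a Hilbert algebra: `x ≤ y` iff `x → y = 1`. -/
def le (x y : A) : Prop := imp x y = one

/-- A special subset of a Hilbert algebra. -/
def IsSpecial (S : Set A) : Prop :=
  ∀ a : A, ∀ b ∈ S, ∃ p : A, imp p a ∈ S ∧ imp p b = b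

/-- A closure endomorphism: an endomorphism that is also a closure operator. -/
def IsClosureEndo (φ : A → A) : Prop :=
  (∀ x y : A, φ (imp x y) = imp (φ x) (φ y)) ∧
  (∀ x : A, le x (φ x)) ∧
  (∀ x : A, φ (φ x) = φ x) ∧
  (∀ x y : A, le x y → le (φ x) (φ y))

/-- `φ a` is the least element of `{x ∈ R : a ≤ x}`. -/
def IsMinMap (R : Set A) (φ : A → A) : Prop :=
  ∀ a : A, φ a ∈ R ∧ le a (φ a) ∧ ∀ x ∈ R, le a x → le (φ a) x

/-! ### Basic Hilbert algebra lemmas -/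

/-- Modus ponens: if `a = 1` and `a → b = 1` then `b = 1`. -/
lemma mp {a b : A} (ha : a = one) (hab : imp a b = one) : b = one := by
  subst ha
  -- `1 → b = 1`, and `b → 1 = b → (1 → b) = 1` by K.
  have h1 : imp b (one : A) = one := by
    conv_lhs => rw [← hab]
    exact imp_one b one
  exact imp_antisymm b one h1 hab

lemma le_refl (x : A) : imp x x = one := by
  have h1 : imp (imp x (imp (imp x x) x)) (imp (imp x (imp x x)) (imp x x)) = one :=
    imp_distrib x (imp x x) x
  have h2 : imp x (imp (imp x x) x) = one := imp_one x (imp x x)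
  have h3 : imp (imp x (imp x x)) (imp x x) = one := mp h2 h1
  exact mp (imp_one x x) h3

lemma imp_one' (x : A) : imp x one = one := by
  have := le_refl x
  calc imp x one = imp x (imp x x) := by rw [le_refl x]
    _ = one := imp_one x x

lemma le_trans {a b c : A} (h1 : imp a b = one) (h2 : imp b c = one) :
    imp a c = one := by
  have h3 : imp a (imp b c) = one := by rw [h2]; exact imp_one' a
  have h4 : imp (imp a b) (imp a c) = one := mp h3 (imp_distrib a b c)
  exact mp h1 h4

lemma one_imp (x : A) : imp one x = x := by
  apply imp_antisymm
  · -- (1→x) → x = 1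
    have h1 : imp (imp one x) (imp one x) = one := le_refl _
    have h2 : imp (imp (imp one x) (imp one x))
        (imp (imp (imp one x) one) (imp (imp one x) x)) = one :=
      imp_distrib (imp one x) one x
    have h3 : imp (imp (imp one x) one) (imp (imp one x) x) = one := mp h1 h2
    exact mp (imp_one' _) h3
  · exact imp_one x one

/-- Monotonicity in the second argument. -/
lemma mono_snd {x y : A} (z : A) (h : imp x y = one) :
    imp (imp z x) (imp z y) = one := by
  have h1 : imp z (imp x y) = one := by rw [h]; exact imp_one' z
  exact mp h1 (imp_distrib z x y)

/-- Antitonicity in the first argument. -/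
lemma anti_fst {x y : A} (z : A) (h : imp x y = one) :
    imp (imp y z) (imp x z) = one := by
  -- x→(y→z) ≤ x→z since x→y = 1:
  have h1 : imp (imp x (imp y z)) (imp x z) = one := by
    have := imp_distrib x y z
    rw [h, one_imp] at this
    exact this
  -- y→z ≤ x→(y→z) by K:
  exact le_trans (imp_one (imp y z) x) h1

/-- Exchange: `x → (y → z) = y → (x → z)`. -/
lemma exchange (x y z : A) : imp x (imp y z) = imp y (imp x z) := by
  have key : ∀ a b c : A, imp (imp a (imp b c)) (imp b (imp a c)) = one := by
    intro a b c
    have h1 : imp (imp a (imp b c)) (imp (imp a b) (imp a c)) = one :=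
      imp_distrib a b c
    exact le_trans h1 (anti_fst (imp a c) (imp_one b a))
  exact imp_antisymm _ _ (key x y z) (key y x z)

/-- `x ≤ (x → y) → y`. -/
lemma le_imp_imp (x y : A) : imp x (imp (imp x y) y) = one := by
  rw [exchange]
  exact le_refl _

/-- If `R` is a special closure retract, the map sending `a` to the least element of
`{x ∈ R : a ≤ x}` is a closure endomorphism with fixpoint set `R`; conversely, the
fixpoint set of a closure endomorphism `ψ` is a special closure retract and
`ψ a = min {x ∈ F_ψ : a ≤ x}`. -/
theorem special_closure_retract_iff_closureEndo :
    (∀ (R : Set A) (φ : A → A), IsSpecial R → IsMinMap R φ →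
       IsClosureEndo φ ∧ {x : A | φ x = x} = R) ∧
    (∀ ψ : A → A, IsClosureEndo ψ →
       IsSpecial {x : A | ψ x = x} ∧ IsMinMap {x : A | ψ x = x} ψ) := by
  constructor
  · intro R φ hspec hmin
    obtain ⟨hmem, hle, hmn⟩ : (∀ a : A, φ a ∈ R) ∧ (∀ a : A, le a (φ a)) ∧
        (∀ a : A, ∀ x ∈ R, le a x → le (φ a) x) :=
      ⟨fun a => (hmin a).1, fun a => (hmin a).2.1, fun a => (hmin a).2.2⟩
    -- elements of R are fixed
    have hfix : ∀ x ∈ R, φ x = x := by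
      intro x hx
      exact imp_antisymm _ _ (hmn x x hx (le_refl x)) (hle x)
    -- key: φ(x→y) = x → φ y
    have hkey : ∀ x y : A, φ (imp x y) = imp x (φ y) := by
      intro x y
      apply imp_antisymm
      · -- φ(x→y) ≤ x→φy via special with a := x→y, b := φ y
        obtain ⟨p, hp1, hp2⟩ := hspec (imp x y) (φ y) (hmem y)
        have h1 : le (φ (imp x y)) (imp p (imp x y)) :=
          hmn (imp x y) _ hp1 (imp_one (imp x y) p)
        have h2 : imp (imp p (imp x y)) (imp x (φ y)) = one := by
          rw [exchange p x y]
          have := mono_snd p (hle y)   -- p→y ≤ p→φy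
          rw [hp2] at this
          exact mono_snd x this
        exact le_trans h1 h2
      · -- x→φy ≤ φ(x→y) via special with a := y, b := φ(x→y)
        obtain ⟨p, hp1, hp2⟩ := hspec y (φ (imp x y)) (hmem (imp x y))
        have h1 : le (φ y) (imp p y) := hmn y _ hp1 (imp_one y p)
        have h2 : imp (imp x (φ y)) (imp x (imp p y)) = one := mono_snd x h1
        have h3 : imp (imp x (imp p y)) (φ (imp x y)) = one := by
          rw [exchange x p y]
          have h4 : le (imp x y) (φ (imp x y)) := hle _
          have := mono_snd p h4
          rw [hp2] at this
          exact this
        exact le_trans h2 h3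
    have hendo : ∀ x y : A, φ (imp x y) = imp (φ x) (φ y) := by
      intro x y
      rw [hkey x y]
      apply imp_antisymm
      · -- x→φy ≤ φx→φy via special with a := x, b := φ y
        obtain ⟨p, hp1, hp2⟩ := hspec x (φ y) (hmem y)
        have h1 : le (φ x) (imp p x) := hmn x _ hp1 (imp_one x p)
        have h2 : imp (imp x (φ y)) (imp p (imp x (φ y))) = one :=
          imp_one _ p
        have h3 : imp (imp p (imp x (φ y))) (imp (imp p x) (imp p (φ y))) = one :=
          imp_distrib p x (φ y)
        rw [hp2] at h3
        have h4 : imp (imp (imp p x) (φ y)) (imp (φ x) (φ y)) = one :=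
          anti_fst (φ y) h1
        exact le_trans (le_trans h2 h3) h4
      · exact anti_fst (φ y) (hle x)
    refine ⟨⟨hendo, hle, fun x => hfix _ (hmem x), fun x y h => hmn x _ (hmem y) (le_trans h (hle y))⟩, ?_⟩
    ext x
    simp only [Set.mem_setOf_eq]
    exact ⟨fun h => h ▸ hmem x, hfix x⟩
  · intro ψ ⟨hendo, hle, hidem, hmono⟩
    constructor
    · intro a b hb
      simp only [Set.mem_setOf_eq] at hb
      refine ⟨imp (ψ a) a, ?_, ?_⟩
      · -- ψ(p→a) = p→a where p = ψa→a; in fact p→a = ψa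
        have hpa : imp (imp (ψ a) a) a = ψ a := by
          apply imp_antisymm
          · -- p→a ≤ ψ(p→a) = ψp→ψa = (ψψa→ψa)→ψa = 1→ψa = ψa
            have h1 : le (imp (imp (ψ a) a) a) (ψ (imp (imp (ψ a) a) a)) := hle _
            rw [hendo, hendo, hidem, le_refl, one_imp] at h1
            exact h1
          · exact le_imp_imp (ψ a) a
        simp only [Set.mem_setOf_eq, hpa]
        exact hidem a
      · -- p→b = b
        apply imp_antisymm
        · have h1 : le (imp (imp (ψ a) a) b) (ψ (imp (imp (ψ a) a) b)) := hle _
          rw [hendo, hendo, hidem, le_refl, one_imp, hb] at h1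
          exact h1
        · exact imp_one b _
    · intro a
      refine ⟨hidem a, hle a, ?_⟩
      intro x hx hax
      simp only [Set.mem_setOf_eq] at hx
      have := hmono a x hax
      rwa [hx] at this

end HilbertAlgebra
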